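/- arXiv:0805.2492 — 2 statements merged into one kernel-verified Lean document; each statement's English description precedes it below -/
import Mathlib

section
/- Let (Ω, F, P) and Q be probability measures such that P restricted to F_n is absolutely continuous with respect to Q restricted to F_n for every n, with likelihood ratio L_n = dP|_{F_n}/dQ|_{F_n}. For any stopping time T with respect to the filtration (F_n) and any event F ∈ F_T, P(F ∩ {T < ∞}) = E_Q[L_T 1_{F ∩ {T < ∞}}]. -/
open MeasureTheory

/-! On `{T = n}` the stopped likelihood ratio `L_T` is just `L n`, and `F ∩ {T = n} ∈ ℱ n`, so the
density property of `L n` gives the identity on each piece `F ∩ {T = n}`; these pieces partition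
`F ∩ {T < ∞}`, and both sides are countably additive. -/

section StoppedDecomposition

variable {Ω : Type*} (F : Set Ω) (T : Ω → ℕ∞)

lemma inter_setOf_lt_top_eq_iUnion :
    F ∩ {ω | T ω < ⊤} = ⋃ n : ℕ, F ∩ {ω | T ω = n} := by
  ext ω
  simp only [Set.mem_inter_iff, Set.mem_ofPred_eq, Set.mem_iUnion]
  constructor
  · rintro ⟨hωF, hlt⟩
    lift T ω to ℕ using hlt.ne with n
    exact ⟨n, hωF, rfl⟩
  · rintro ⟨n, hωF, hn⟩
    exact ⟨hωF, hn ▸ ENat.natCast_lt_top n⟩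

lemma pairwise_disjoint_inter_setOf_eq :
    Pairwise (Function.onFun Disjoint fun n : ℕ => F ∩ {ω | T ω = n}) := by
  intro m n hmn
  simp only [Function.onFun, Set.disjoint_left]
  rintro ω ⟨-, hm⟩ ⟨-, hn⟩
  exact hmn (Nat.cast_injective (hm.symm.trans hn))

variable [MeasurableSpace Ω] (μ : Measure Ω) {F T}

lemma measure_inter_setOf_lt_top_eq_tsum (hF : ∀ n : ℕ, MeasurableSet (F ∩ {ω | T ω = n})) :
    μ (F ∩ {ω | T ω < ⊤}) = ∑' n : ℕ, μ (F ∩ {ω | T ω = n}) := by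
  rw [inter_setOf_lt_top_eq_iUnion, measure_iUnion (pairwise_disjoint_inter_setOf_eq F T) hF]

lemma setLIntegral_inter_setOf_lt_top_eq_tsum
    (hF : ∀ n : ℕ, MeasurableSet (F ∩ {ω | T ω = n})) (g : ℕ → Ω → ENNReal) :
    ∫⁻ ω in F ∩ {ω | T ω < ⊤}, g (T ω).toNat ω ∂μ =
      ∑' n : ℕ, ∫⁻ ω in F ∩ {ω | T ω = n}, g n ω ∂μ := by
  rw [inter_setOf_lt_top_eq_iUnion, lintegral_iUnion hF (pairwise_disjoint_inter_setOf_eq F T)]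
  refine tsum_congr fun n => setLIntegral_congr_fun (hF n) ?_
  rintro ω ⟨-, hn : T ω = n⟩
  simp only [hn, ENat.toNat_natCast]

end StoppedDecomposition

theorem stmt4_general {Ω : Type*} {mΩ : MeasurableSpace Ω} (P Q : Measure Ω)
    (ℱ : Filtration ℕ mΩ) (L : ℕ → Ω → ℝ)
    -- `L n` is the density of `P` w.r.t. `Q` on `ℱ n`
    (hLR : ∀ n, ∀ A : Set Ω, MeasurableSet[ℱ n] A →
      P A = ∫⁻ ω in A, ENNReal.ofReal (L n ω) ∂Q)
    -- `T` is a stopping time (with value `⊤` meaning "never stops")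
    (T : Ω → ℕ∞)
    -- `F` belongs to the stopped σ-algebra `ℱ_T`
    (F : Set Ω)
    (hF : ∀ n : ℕ, MeasurableSet[ℱ n] (F ∩ {ω | T ω = (n : ℕ∞)})) :
    P (F ∩ {ω | T ω < ⊤}) =
      ∫⁻ ω in F ∩ {ω | T ω < ⊤}, ENNReal.ofReal (L (T ω).toNat ω) ∂Q := by
  have hF' : ∀ n : ℕ, MeasurableSet (F ∩ {ω | T ω = n}) := fun n => ℱ.le n _ (hF n)
  rw [measure_inter_setOf_lt_top_eq_tsum P hF',
    setLIntegral_inter_setOf_lt_top_eq_tsum Q hF' fun n ω => ENNReal.ofReal (L n ω)]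
  exact tsum_congr fun n => hLR n _ (hF n)

/-- Wald's likelihood ratio identity: if `P ≪ Q` on each `ℱ n` with likelihood
ratio `L n`, then for any stopping time `T` and any `F ∈ ℱ_T`,
`P(F ∩ {T < ∞}) = E_Q[L_T 1_{F ∩ {T < ∞}}]`. -/
theorem stmt4 {Ω : Type*} {mΩ : MeasurableSpace Ω} (P Q : Measure Ω)
    [IsProbabilityMeasure P] [IsProbabilityMeasure Q]
    (ℱ : Filtration ℕ mΩ) (L : ℕ → Ω → ℝ)
    (hL_nonneg : ∀ n ω, 0 ≤ L n ω)
    (hL_meas : ∀ n, Measurable[ℱ n] (L n))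
    -- `L n` is the density of `P` w.r.t. `Q` on `ℱ n`
    (hLR : ∀ n, ∀ A : Set Ω, MeasurableSet[ℱ n] A →
      P A = ∫⁻ ω in A, ENNReal.ofReal (L n ω) ∂Q)
    -- `T` is a stopping time (with value `⊤` meaning "never stops")
    (T : Ω → ℕ∞)
    (hT : ∀ n : ℕ, MeasurableSet[ℱ n] {ω | T ω = (n : ℕ∞)})
    -- `F` belongs to the stopped σ-algebra `ℱ_T`
    (F : Set Ω)
    (hF : ∀ n : ℕ, MeasurableSet[ℱ n] (F ∩ {ω | T ω = (n : ℕ∞)})) :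
    P (F ∩ {ω | T ω < ⊤}) =
      ∫⁻ ω in F ∩ {ω | T ω < ⊤}, ENNReal.ofReal (L (T ω).toNat ω) ∂Q :=
  stmt4_general P Q ℱ L hLR T F hF
end

section
/- Let (T, S_T) take values in {(t, s) : t ∈ J, s ∈ ℝ} with J ⊂ ℕ finite, and define Siegmund's ordering: (t, s) > (t', s') iff (i) t = t' and s > s', or (ii) t < t' and s ≥ b_t, or (iii) t > t' and s' ≤ a_{t'}, where a_n < b_n for all n ∈ J. Then this relation, restricted to the attainable sample space {(t, s) : t ∈ J, and (s ≥ b_t or s ≤ a_t or t = max J)} of the stopping rule T = inf{n ∈ J : S_n ≥ b_n or S_n ≤ a_n} (with T = max J if no crossing), is a strict total order. -/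
/-- Siegmund's ordering of the sample space of a stopped sum `(T, S_T)`:
`(t, s) > (t', s')` iff `t = t'` and `s > s'`, or `t < t'` and `s ≥ b_t`, or
`t > t'` and `s' ≤ a_{t'}`. -/
def siegmundGT (a b : ℕ → ℝ) (p q : ℕ × ℝ) : Prop :=
  (p.1 = q.1 ∧ q.2 < p.2) ∨ (p.1 < q.1 ∧ b p.1 ≤ p.2) ∨ (q.1 < p.1 ∧ q.2 ≤ a q.1)

/-- On the attainable sample space of the stopping rule
`T = inf{n ∈ J : S_n ≥ b_n or S_n ≤ a_n}` (with `T = max J` if no crossing),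
Siegmund's ordering is a strict total order: irreflexive, transitive, and any
two distinct attainable points are comparable in exactly one direction. -/
theorem stmt14 (J : Finset ℕ) (hne : J.Nonempty) (a b : ℕ → ℝ)
    (hab : ∀ n ∈ J, a n < b n) :
    let M := J.max' hne
    let attainable : Set (ℕ × ℝ) :=
      {p | p.1 ∈ J ∧ (b p.1 ≤ p.2 ∨ p.2 ≤ a p.1 ∨ p.1 = M)}
    (∀ p ∈ attainable, ¬ siegmundGT a b p p) ∧
    (∀ p ∈ attainable, ∀ q ∈ attainable, ∀ r ∈ attainable,
      siegmundGT a b p q → siegmundGT a b q r → siegmundGT a b p r) ∧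
    (∀ p ∈ attainable, ∀ q ∈ attainable, p ≠ q →
      (siegmundGT a b p q ∨ siegmundGT a b q p) ∧
      ¬ (siegmundGT a b p q ∧ siegmundGT a b q p)) := by
  intro M attainable
  refine ⟨?_, ?_, ?_⟩
  · rintro ⟨t, s⟩ _ (⟨_, h⟩ | ⟨h, _⟩ | ⟨h, _⟩) <;> simp_all
  · rintro ⟨t, s⟩ ⟨hpJ, _⟩ ⟨u, v⟩ ⟨hqJ, _⟩ ⟨w, x⟩ _ hpq hqr
    rcases hpq with ⟨h1, h2⟩ | ⟨h1, h2⟩ | ⟨h1, h2⟩ <;>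
      rcases hqr with ⟨g1, g2⟩ | ⟨g1, g2⟩ | ⟨g1, g2⟩ <;>
      simp only [siegmundGT] at *
    · exact Or.inl ⟨h1.trans g1, g2.trans h2⟩
    · exact Or.inr (Or.inl ⟨by omega, by rw [h1]; linarith⟩)
    · exact Or.inr (Or.inr ⟨h1 ▸ g1, g2⟩)
    · exact Or.inr (Or.inl ⟨g1 ▸ h1, h2⟩)
    · exact Or.inr (Or.inl ⟨h1.trans g1, h2⟩)
    · rcases lt_trichotomy t w with h | h | h
      · exact Or.inr (Or.inl ⟨h, h2⟩)
      · exact Or.inl ⟨h, lt_of_le_of_lt (h ▸ g2) (lt_of_lt_of_le (h ▸ hab t hpJ) h2)⟩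
      · exact Or.inr (Or.inr ⟨h, g2⟩)
    · exact Or.inr (Or.inr ⟨g1 ▸ h1, g1 ▸ lt_of_lt_of_le g2 h2 |>.le⟩)
    · exact absurd (h2.trans_lt (hab u hqJ)) (not_lt_of_ge g2)
    · exact Or.inr (Or.inr ⟨g1.trans h1, g2⟩)
  · rintro ⟨t, s⟩ ⟨hpJ, hp⟩ ⟨u, v⟩ ⟨hqJ, hq⟩ hne'
    constructor
    · rcases lt_trichotomy t u with h | h | h
      · have htM : t ≠ M := Nat.ne_of_lt (lt_of_lt_of_le h (J.le_max' u hqJ))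
        rcases hp with hb | ha | hM
        · exact Or.inl (Or.inr (Or.inl ⟨h, hb⟩))
        · exact Or.inr (Or.inr (Or.inr ⟨h, ha⟩))
        · exact absurd hM htM
      · subst h
        have : s ≠ v := fun hsv => hne' (by simp [hsv])
        rcases this.lt_or_gt with h | h
        · exact Or.inr (Or.inl ⟨rfl, h⟩)
        · exact Or.inl (Or.inl ⟨rfl, h⟩)
      · have huM : u ≠ M := Nat.ne_of_lt (lt_of_lt_of_le h (J.le_max' t hpJ))
        rcases hq with hb | ha | hM
        · exact Or.inr (Or.inr (Or.inl ⟨h, hb⟩))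
        · exact Or.inl (Or.inr (Or.inr ⟨h, ha⟩))
        · exact absurd hM huM
    · rintro ⟨hpq, hqp⟩
      rcases hpq with ⟨h1, h2⟩ | ⟨h1, h2⟩ | ⟨h1, h2⟩ <;>
        rcases hqp with ⟨g1, g2⟩ | ⟨g1, g2⟩ | ⟨g1, g2⟩ <;>
        simp only at * <;>
        first
        | exact absurd (h2.trans g2) (lt_irrefl _)
        | omega
        | linarith [hab t hpJ]
        | linarith [hab u hqJ]
end
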